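/- arXiv:1508.05282 — 2 statements merged into one kernel-verified Lean document; each statement's English description precedes it below -/
import Mathlib

section
/- Let G be a finite simple graph with n ≥ 1 vertices and m edges, let M ≥ 1 and t be natural numbers, and let G' be the simple graph defined as follows: the vertex set of G' is V(G) ⊎ K where |K| = M·n; two vertices of V(G) are adjacent in G' iff they are distinct and non-adjacent in G; any two distinct vertices of K are adjacent in G'; and every vertex of K is adjacent in G' to every vertex of V(G). If G' admits a linear arrangement π with cost(π) + t·M·n ≤ binom((M+1)·n + 1, 3), then there exists a partition (A, B) of V(G) such that M·|E_G(A,B)| + 2m ≥ M·t, where E_G(A,B) is the set of edges of G with one endpoint in A and the other in B. -/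
open Classical

/-- The graph `G'` of the reduction of Garey, Johnson and Stockmeyer: the complement of
`G` together with a clique `K` on `N` fresh vertices that is fully connected to the rest
of the graph. -/
def gareyGraph {V : Type*} (G : SimpleGraph V) (N : ℕ) : SimpleGraph (V ⊕ Fin N) where
  Adj x y := x ≠ y ∧ ∀ u v, x = Sum.inl u → y = Sum.inl v → ¬ G.Adj u v
  symm := by
    constructor
    rintro x y ⟨hne, h⟩
    exact ⟨hne.symm, fun u v hy hx hadj => h v u hx hy hadj.symm⟩
  loopless := ⟨fun x h => h.1 rfl⟩

/-- The cost of the vertex placement `f : V → ℤ` for the simple graph `G`: the sum over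
all edges `{u, v}` of `G` of `|f u - f v|`. -/
noncomputable def lincost {V : Type*} [Fintype V] [DecidableEq V]
    (G : SimpleGraph V) (f : V → ℤ) : ℤ :=
  ∑ e ∈ Finset.univ.filter (fun e : Sym2 V => e ∈ G.edgeSet),
    Sym2.lift ⟨fun u v => |f u - f v|, fun u v => abs_sub_comm (f u) (f v)⟩ e

/-- The size of the cut determined by `S` in the simple graph `G`: the number of edges of
`G` with exactly one endpoint in `S`. -/
noncomputable def cutSizeS {V : Type*} [Fintype V] [DecidableEq V]
    (G : SimpleGraph V) (S : Finset V) : ℕ :=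
  (Finset.univ.filter fun e : Sym2 V =>
    e ∈ G.edgeSet ∧ ∃ u v, e = s(u, v) ∧ u ∈ S ∧ v ∉ S).card

/-- The number of edges of the simple graph `G`. -/
noncomputable def edgeCount {V : Type*} [Fintype V] [DecidableEq V]
    (G : SimpleGraph V) : ℕ :=
  (Finset.univ.filter fun e : Sym2 V => e ∈ G.edgeSet).card

/-!
The complement of `G` and the clique `K` together with a copy of `G` form the complete graph on
`V ⊕ K`, so for any arrangement `π` of the `N = (M + 1)n` vertices,
`cost_{G'}(π) + cost_G(π|_V) = cost_{K_N}(π) = C(N + 1, 3)`; the hypothesis thus says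
`cost_G(π|_V) ≥ tMn`. Cutting the line between positions `k` and `k + 1` for every `k`
expresses a cost as the sum of the `N` sizes of the resulting prefix cuts, so
`cost_G(π|_V) ≤ N · maxcut(G)`, whence `tM ≤ (M + 1) · maxcut(G) ≤ M · maxcut(G) + m`.
-/

open Finset

lemma abs_sub_eq_card_filter_xor {N a b : ℕ} (ha : a < N) (hb : b < N) :
    |(a : ℤ) - b| = #{k ∈ range N | Xor (a ≤ k) (b ≤ k)} := by
  have hfilter : {k ∈ range N | Xor (a ≤ k) (b ≤ k)} = Ico (min a b) (max a b) := by
    ext k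
    rw [mem_filter, mem_range, mem_Ico, Xor]
    omega
  rw [hfilter, Nat.card_Ico, abs_eq_max_neg]
  omega

lemma Sym2.exists_mk_eq_and_and_not_iff {α : Type*} (p : α → Prop) (x y : α) :
    (∃ u v, s(x, y) = s(u, v) ∧ p u ∧ ¬p v) ↔ Xor (p x) (p y) := by
  constructor
  · rintro ⟨u, v, h, hu, hv⟩
    rcases Sym2.eq_iff.1 h with ⟨rfl, rfl⟩ | ⟨rfl, rfl⟩ <;> tauto
  · rintro (⟨hx, hy⟩ | ⟨hy, hx⟩)
    · exact ⟨x, y, rfl, hx, hy⟩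
    · exact ⟨y, x, Sym2.eq_swap, hy, hx⟩

lemma sum_range_succ_eq_choose_two (N : ℕ) : ∑ k ∈ range N, (k + 1) = (N + 1).choose 2 := by
  induction N with
  | zero => rfl
  | succ N ih =>
    rw [sum_range_succ, ih, Nat.choose_succ_succ (N + 1) 1, Nat.choose_one_right, add_comm]

lemma sum_range_succ_mul_sub_succ_eq_choose_three (N : ℕ) :
    ∑ k ∈ range N, (k + 1) * (N - (k + 1)) = (N + 1).choose 3 := by
  induction N with
  | zero => rfl
  | succ N ih =>
    have hsplit : ∀ k ∈ range N,
        (k + 1) * (N + 1 - (k + 1)) = (k + 1) * (N - (k + 1)) + (k + 1) := fun k hk => by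
      rw [Nat.sub_add_comm (mem_range.1 hk), Nat.mul_succ]
    rw [sum_range_succ, sum_congr rfl hsplit, sum_add_distrib, ih, sum_range_succ_eq_choose_two,
      Nat.choose_succ_succ (N + 1) 2]
    simp [add_comm]

section

variable {V : Type*} [Fintype V] [DecidableEq V]

lemma lincost_sup {G₁ G₂ : SimpleGraph V} (h : Disjoint G₁ G₂) (f : V → ℤ) :
    lincost (G₁ ⊔ G₂) f = lincost G₁ f + lincost G₂ f := by
  simp only [lincost, SimpleGraph.edgeSet_sup, Set.mem_union, filter_or]
  refine sum_union (disjoint_filter.2 fun e _ h₁ h₂ => ?_)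
  exact (SimpleGraph.disjoint_edgeSet.2 h).ne_of_mem h₁ h₂ rfl

lemma lincost_map {W : Type*} [Fintype W] [DecidableEq W] (G : SimpleGraph V) {e : V → W}
    (he : Function.Injective e) (f : W → ℤ) :
    lincost (G.map e) f = lincost G (fun v => f (e v)) := by
  have hedges : univ.filter (· ∈ (G.map e).edgeSet) =
      (univ.filter (· ∈ G.edgeSet)).image (Sym2.map e) := by
    ext z
    simp only [mem_filter, mem_univ, true_and, mem_image]
    rw [show G.map e = G.map (⟨e, he⟩ : V ↪ W) from rfl, SimpleGraph.edgeSet_map]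
    rfl
  rw [lincost, filter_congr_decidable, hedges, sum_image fun _ _ _ _ h => Sym2.map.injective he h]
  refine sum_congr rfl fun z _ => ?_
  induction z
  rfl

lemma lincost_eq_sum_cutSizeS (G : SimpleGraph V) {N : ℕ} (h : V → Fin N) :
    lincost G (fun v => ((h v : ℕ) : ℤ)) =
      ∑ k ∈ range N, (cutSizeS G {v | (h v : ℕ) ≤ k} : ℤ) := by
  simp only [lincost, cutSizeS, card_filter, sum_filter]
  push_cast
  rw [sum_comm]
  refine sum_congr rfl fun e _ => ?_
  induction e with
  | h x y =>
    by_cases hxy : s(x, y) ∈ G.edgeSet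
    · simp only [hxy, if_true, true_and, Sym2.lift_mk, mem_filter, mem_univ,
        Sym2.exists_mk_eq_and_and_not_iff fun v => (h v : ℕ) ≤ _]
      rw [abs_sub_eq_card_filter_xor (h x).isLt (h y).isLt, card_filter]
      push_cast
      rfl
    · simp [hxy]

lemma cutSizeS_top (S : Finset V) : cutSizeS ⊤ S = #S * #Sᶜ := by
  have hcut : univ.filter (fun e : Sym2 V =>
      e ∈ (⊤ : SimpleGraph V).edgeSet ∧ ∃ u v, e = s(u, v) ∧ u ∈ S ∧ v ∉ S)
      = (S ×ˢ Sᶜ).image fun p => s(p.1, p.2) := by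
    ext e
    simp only [mem_filter, mem_univ, true_and, mem_image, mem_product, mem_compl]
    constructor
    · rintro ⟨-, u, v, rfl, hu, hv⟩
      exact ⟨(u, v), ⟨hu, hv⟩, rfl⟩
    · rintro ⟨⟨u, v⟩, ⟨hu, hv⟩, rfl⟩
      exact ⟨by simpa using ne_of_mem_of_not_mem hu hv, u, v, rfl, hu, hv⟩
  rw [cutSizeS, filter_congr_decidable, hcut, card_image_of_injOn, card_product]
  rintro ⟨u, v⟩ huv ⟨u', v'⟩ huv' h
  simp only [coe_product, Set.mem_prod, mem_coe, mem_compl] at huv huv'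
  rcases Sym2.eq_iff.1 h with ⟨rfl, rfl⟩ | ⟨rfl, rfl⟩
  · rfl
  · exact absurd huv.1 huv'.2

lemma lincost_top_of_equiv {N : ℕ} (π : V ≃ Fin N) :
    lincost ⊤ (fun v => ((π v : ℕ) : ℤ)) = (N + 1).choose 3 := by
  have hprefix : ∀ k ∈ range N, #{v | (π v : ℕ) ≤ k} = k + 1 := fun k hk => by
    rw [← Fin.card_Iic ⟨k, mem_range.1 hk⟩]
    exact card_equiv π fun v => by simp [Fin.le_def]
  have hcard : Fintype.card V = N := by simpa using Fintype.card_congr π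
  rw [lincost_eq_sum_cutSizeS ⊤ π, ← sum_range_succ_mul_sub_succ_eq_choose_three]
  push_cast
  refine sum_congr rfl fun k hk => ?_
  rw [cutSizeS_top, card_compl, hprefix k hk, hcard]
  push_cast
  rfl

variable (G : SimpleGraph V)

noncomputable def maxCut : ℕ := univ.sup (cutSizeS G)

lemma exists_cutSizeS_eq_maxCut : ∃ A, cutSizeS G A = maxCut G := by
  obtain ⟨A, -, hA⟩ := exists_mem_eq_sup univ univ_nonempty (cutSizeS G)
  exact ⟨A, hA.symm⟩

lemma maxCut_le_edgeCount : maxCut G ≤ edgeCount G :=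
  Finset.sup_le fun _ _ => card_le_card <| monotone_filter_right _ fun _ _ => And.left

lemma lincost_le_mul_maxCut {N : ℕ} (h : V → Fin N) :
    lincost G (fun v => ((h v : ℕ) : ℤ)) ≤ N * maxCut G := by
  rw [lincost_eq_sum_cutSizeS]
  calc ∑ k ∈ range N, (cutSizeS G {v | (h v : ℕ) ≤ k} : ℤ)
      ≤ ∑ k ∈ range N, (maxCut G : ℤ) :=
        sum_le_sum fun k _ => by exact_mod_cast le_sup (mem_univ _)
    _ = N * maxCut G := by simp

end

section

variable {V : Type*} (G : SimpleGraph V) (N : ℕ)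

lemma gareyGraph_sup_map_inl : gareyGraph G N ⊔ G.map Sum.inl = ⊤ := by
  ext (u | u) (v | v) <;> simp [gareyGraph, SimpleGraph.map_adj']
  tauto

lemma disjoint_gareyGraph_map_inl : Disjoint (gareyGraph G N) (G.map Sum.inl) := by
  rw [disjoint_iff]
  ext (u | u) (v | v) <;> simp +contextual [gareyGraph, SimpleGraph.map_adj']

end

theorem maxcut_to_ola_backward_general {V : Type*} [Fintype V] [DecidableEq V]
    (G : SimpleGraph V)
    (n : ℕ) (hn1 : 1 ≤ n)
    (m : ℕ) (hm : m = edgeCount G)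
    (M t : ℕ)
    (π : (V ⊕ Fin (M * n)) ≃ Fin (n + M * n))
    (hπ : lincost (gareyGraph G (M * n)) (fun v => ((π v : ℕ) : ℤ)) + (t * M * n : ℕ) ≤
      (Nat.choose ((M + 1) * n + 1) 3 : ℤ)) :
    ∃ A : Finset V, M * t ≤ M * cutSizeS G A + 2 * m := by
  set f : V ⊕ Fin (M * n) → ℤ := fun v => ((π v : ℕ) : ℤ)
  have htotal : lincost (gareyGraph G (M * n)) f + lincost G (fun v => f (Sum.inl v)) =
      (Nat.choose ((M + 1) * n + 1) 3 : ℤ) := by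
    rw [← lincost_map G Sum.inl_injective, ← lincost_sup (disjoint_gareyGraph_map_inl G _),
      gareyGraph_sup_map_inl, lincost_top_of_equiv π, add_one_mul, add_comm (M * n)]
  have hcostG : lincost G (fun v => f (Sum.inl v)) ≤ (n + M * n) * maxCut G :=
    lincost_le_mul_maxCut G fun v => π (Sum.inl v)
  have hcut : t * M * n ≤ (n + M * n) * maxCut G := by
    have : ((t * M * n : ℕ) : ℤ) ≤ ((n + M * n) * maxCut G : ℕ) := by
      push_cast at hπ hcostG ⊢
      linarith
    exact_mod_cast this
  have hmax : t * M ≤ maxCut G + M * maxCut G :=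
    Nat.le_of_mul_le_mul_right (by linarith) hn1
  obtain ⟨A, hA⟩ := exists_cutSizeS_eq_maxCut G
  exact ⟨A, by rw [hA, hm]; linarith [maxCut_le_edgeCount G]⟩

/-- If the graph `G'` obtained by adding a fully connected clique of `M·n` fresh vertices
to the complement of `G` (where `G` has `n ≥ 1` vertices and `m` edges) admits a linear
arrangement `π` with `cost(π) + t·M·n ≤ C((M+1)·n + 1, 3)`, then `G` has a partition
`(A, B)` of its vertex set with `M·|E_G(A,B)| + 2m ≥ M·t`. -/
theorem maxcut_to_ola_backward {V : Type*} [Fintype V] [DecidableEq V]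
    (G : SimpleGraph V)
    (n : ℕ) (hn : n = Fintype.card V) (hn1 : 1 ≤ n)
    (m : ℕ) (hm : m = edgeCount G)
    (M t : ℕ) (hM : 1 ≤ M)
    (π : (V ⊕ Fin (M * n)) ≃ Fin (n + M * n))
    (hπ : lincost (gareyGraph G (M * n)) (fun v => ((π v : ℕ) : ℤ)) + (t * M * n : ℕ) ≤
      (Nat.choose ((M + 1) * n + 1) 3 : ℤ)) :
    ∃ A : Finset V, M * t ≤ M * cutSizeS G A + 2 * m :=
  maxcut_to_ola_backward_general G n hn1 m hm M t π hπ
end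

section
/- Let G be a finite simple graph with n ≥ 1 vertices, let M ≥ 1 be a natural number, and let G' be the simple graph defined as follows: the vertex set of G' is V(G) ⊎ K where |K| = M·n; two vertices of V(G) are adjacent in G' iff they are distinct and non-adjacent in G; any two distinct vertices of K are adjacent in G'; and every vertex of K is adjacent in G' to every vertex of V(G). Then there exists a linear arrangement π of G' of minimum cost (i.e., cost(π) ≤ cost(π') for every linear arrangement π' of G') in which the set K is consecutive. -/
open Classical

/-!
Every vertex of `K` is universal in `G'`. Since all arrangements give the complete graph the
same cost, the cost of `G'` is a constant minus the cost of its complement, in which the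
vertices of `K` are isolated. Hence swapping a vertex `x ∉ K` with some `k ∈ K` changes the cost
by `∑ |π x - π u| - ∑ |π k - π u|`, both sums running over the non-neighbours `u` of `x`.
If `x` lies between the leftmost vertex `k₁` and the rightmost vertex `k₂` of `K`, convexity
of `r ↦ ∑ |r - π u|` shows that one of the swaps with `k₁` or `k₂` does not increase the cost,
and it strictly shrinks the set of such vertices `x`. An optimal arrangement with the fewest
such vertices therefore has none, which means that `K` is consecutive.
-/

open Finset

section LinearCost

variable {α : Type*} [Fintype α] [DecidableEq α]

lemma lincost_add_lincost_compl (H : SimpleGraph α) (f : α → ℤ) :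
    lincost H f + lincost Hᶜ f = lincost ⊤ f := by
  simp only [lincost, sum_filter, ← sum_add_distrib]
  refine sum_congr rfl fun e _ => ?_
  induction e using Sym2.ind with
  | _ u v => by_cases huv : u = v <;> by_cases h : H.Adj u v <;> simp [huv, h]

lemma lincost_top_comp_perm (σ : Equiv.Perm α) (f : α → ℤ) :
    lincost ⊤ (f ∘ σ) = lincost ⊤ f := by
  simp only [lincost, sum_filter]
  refine Fintype.sum_bijective (Sym2.map σ)
    (Finite.injective_iff_bijective.mp (Sym2.map.injective σ.injective)) _ _ fun e => ?_
  induction e using Sym2.ind with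
  | _ u v => simp

lemma lincost_sub_lincost_eq_sum_neighborFinset (H : SimpleGraph α) [DecidableRel H.Adj]
    (f g : α → ℤ) (x : α)
    (hfg : ∀ u v, H.Adj u v → u ≠ x → v ≠ x → |g u - g v| = |f u - f v|) :
    lincost H g - lincost H f =
      ∑ u ∈ H.neighborFinset x, (|g x - g u| - |f x - f u|) := by
  set len : (α → ℤ) → Sym2 α → ℤ := fun h =>
    Sym2.lift ⟨fun u v => |h u - h v|, fun u v => abs_sub_comm (h u) (h v)⟩
  have hstar : {e ∈ (univ : Finset (Sym2 α)) | e ∈ H.edgeSet ∧ x ∈ e} =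
      (H.neighborFinset x).image (s(x, ·)) := by
    ext e
    induction e using Sym2.ind with
    | _ u v =>
      simp only [mem_filter, mem_univ, true_and, SimpleGraph.mem_edgeSet, Sym2.mem_iff,
        mem_image, SimpleGraph.mem_neighborFinset, Sym2.eq_iff]
      constructor
      · rintro ⟨h, rfl | rfl⟩
        · exact ⟨v, h, by simp⟩
        · exact ⟨u, h.symm, by simp⟩
      · rintro ⟨w, h, ⟨rfl, rfl⟩ | ⟨rfl, rfl⟩⟩
        · exact ⟨h, .inl rfl⟩
        · exact ⟨h.symm, .inr rfl⟩
  have hoff :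
      ∑ e ∈ (univ : Finset (Sym2 α)) with e ∈ H.edgeSet ∧ x ∉ e, (len g e - len f e) = 0 := by
    refine sum_eq_zero fun e he => ?_
    induction e using Sym2.ind with
    | _ u v =>
      simp only [mem_filter, mem_univ, true_and, SimpleGraph.mem_edgeSet, Sym2.mem_iff,
        not_or] at he
      simp [len, hfg u v he.1 (Ne.symm he.2.1) (Ne.symm he.2.2)]
  calc lincost H g - lincost H f
      = ∑ e ∈ univ with e ∈ H.edgeSet, (len g e - len f e) := by
        rw [lincost, lincost, ← sum_sub_distrib]
        congr!
    _ = ∑ e ∈ univ with e ∈ H.edgeSet ∧ x ∈ e, (len g e - len f e) := by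
      rw [← sum_filter_add_sum_filter_not _ (x ∈ ·), filter_filter, filter_filter, hoff, add_zero]
    _ = ∑ u ∈ H.neighborFinset x, (|g x - g u| - |f x - f u|) := by
      rw [hstar, sum_image fun u _ w _ h => Sym2.congr_right.mp h]
      rfl

lemma lincost_comp_swap_of_forall_adj (H : SimpleGraph α) (f : α → ℤ) {k : α}
    (hk : ∀ v, v ≠ k → H.Adj k v) (x : α) :
    lincost H (f ∘ Equiv.swap x k) = lincost H f +
      (∑ u ∈ Hᶜ.neighborFinset x, |f x - f u| - ∑ u ∈ Hᶜ.neighborFinset x, |f k - f u|) := by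
  have hiso : ∀ v, ¬ Hᶜ.Adj k v := fun v h => h.2 (hk v (Ne.symm h.1))
  have hfix : ∀ u w, Hᶜ.Adj u w → u ≠ x → Equiv.swap x k u = u := fun u w h hux =>
    Equiv.swap_apply_of_ne_of_ne hux fun huk => hiso w (huk ▸ h)
  have hcompl := lincost_sub_lincost_eq_sum_neighborFinset Hᶜ f (f ∘ Equiv.swap x k) x
    fun u v huv hux hvx => by simp [hfix u v huv hux, hfix v u huv.symm hvx]
  have hnbr : ∑ u ∈ Hᶜ.neighborFinset x, (|(f ∘ Equiv.swap x k) x - (f ∘ Equiv.swap x k) u|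
      - |f x - f u|) = ∑ u ∈ Hᶜ.neighborFinset x, |f k - f u| -
        ∑ u ∈ Hᶜ.neighborFinset x, |f x - f u| := by
    rw [← sum_sub_distrib]
    refine sum_congr rfl fun u hu => ?_
    rw [SimpleGraph.mem_neighborFinset] at hu
    simp [hfix u x hu.symm (Ne.symm hu.ne)]
  linarith [lincost_add_lincost_compl H f, lincost_add_lincost_compl H (f ∘ Equiv.swap x k),
    lincost_top_comp_perm (Equiv.swap x k) f]

end LinearCost

lemma mul_abs_sub_le_of_mem_Icc (q : ℤ) {r₁ p r₂ : ℤ} (h₁ : r₁ ≤ p) (h₂ : p ≤ r₂) :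
    (r₂ - r₁) * |p - q| ≤ (r₂ - p) * |r₁ - q| + (p - r₁) * |r₂ - q| := by
  calc (r₂ - r₁) * |p - q| = |(r₂ - p) * (r₁ - q) + (p - r₁) * (r₂ - q)| := by
        rw [← abs_of_nonneg (sub_nonneg.mpr (h₁.trans h₂)), ← abs_mul]
        congr 1
        ring
    _ ≤ |(r₂ - p) * (r₁ - q)| + |(p - r₁) * (r₂ - q)| := abs_add_le _ _
    _ = (r₂ - p) * |r₁ - q| + (p - r₁) * |r₂ - q| := by
        rw [abs_mul, abs_mul, abs_of_nonneg (sub_nonneg.mpr h₂), abs_of_nonneg (sub_nonneg.mpr h₁)]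

lemma sum_abs_sub_le_or_sum_abs_sub_le {ι : Type*} (s : Finset ι) (q : ι → ℤ) {r₁ p r₂ : ℤ}
    (h₁ : r₁ < p) (h₂ : p < r₂) :
    ∑ i ∈ s, |p - q i| ≤ ∑ i ∈ s, |r₁ - q i| ∨ ∑ i ∈ s, |p - q i| ≤ ∑ i ∈ s, |r₂ - q i| := by
  by_contra! h
  have hconv : (r₂ - r₁) * ∑ i ∈ s, |p - q i| ≤
      (r₂ - p) * ∑ i ∈ s, |r₁ - q i| + (p - r₁) * ∑ i ∈ s, |r₂ - q i| := by
    simp only [mul_sum, ← sum_add_distrib]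
    exact sum_le_sum fun i _ => mul_abs_sub_le_of_mem_Icc (q i) h₁.le h₂.le
  nlinarith [mul_lt_mul_of_pos_left h.1 (sub_pos.mpr h₂),
    mul_lt_mul_of_pos_left h.2 (sub_pos.mpr h₁)]

section Interlopers

variable {α β : Type*} [Fintype α] [DecidableEq α] [LinearOrder β]

def interlopers (K : Finset α) (f : α → β) : Finset α :=
  {x | x ∉ K ∧ (∃ k ∈ K, f k < f x) ∧ ∃ k ∈ K, f x < f k}

variable {K : Finset α} {f : α → β}

lemma mem_interlopers {x : α} :
    x ∈ interlopers K f ↔ x ∉ K ∧ (∃ k ∈ K, f k < f x) ∧ ∃ k ∈ K, f x < f k := by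
  simp [interlopers]

lemma interlopers_toDual_comp (K : Finset α) (f : α → β) :
    interlopers K (OrderDual.toDual ∘ f) = interlopers K f := by
  ext x
  simp only [mem_interlopers, Function.comp_apply, OrderDual.toDual_lt_toDual]
  tauto

lemma interlopers_comp_swap_ssubset {x k : α} (hx : x ∈ interlopers K f) (hk : k ∈ K)
    (hmin : ∀ k' ∈ K, f k ≤ f k') :
    interlopers K (f ∘ Equiv.swap x k) ⊂ interlopers K f := by
  obtain ⟨hxK, ⟨kl, hkl, hklx⟩, kr, hkr, hxkr⟩ := mem_interlopers.mp hx
  have hmin' : ∀ k' ∈ K, f k ≤ f (Equiv.swap x k k') := by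
    intro k' hk'
    rcases eq_or_ne k' k with rfl | hk'k
    · simpa using ((hmin kl hkl).trans_lt hklx).le
    · rw [Equiv.swap_apply_of_ne_of_ne (ne_of_mem_of_not_mem hk' hxK) hk'k]
      exact hmin k' hk'
  have hxnot : x ∉ interlopers K (f ∘ Equiv.swap x k) := by
    intro h
    obtain ⟨-, ⟨k', hk', hlt⟩, -⟩ := mem_interlopers.mp h
    simp only [Function.comp_apply, Equiv.swap_apply_left] at hlt
    exact (hmin' k' hk').not_gt hlt
  refine (ssubset_iff_of_subset fun v hv => ?_).mpr ⟨x, hx, hxnot⟩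
  have hvx : v ≠ x := by rintro rfl; exact hxnot hv
  obtain ⟨hvK, ⟨k₁, hk₁, hlt₁⟩, ⟨k₂, hk₂, hlt₂⟩⟩ := mem_interlopers.mp hv
  have hfix : Equiv.swap x k v = v :=
    Equiv.swap_apply_of_ne_of_ne hvx (ne_of_mem_of_not_mem hk hvK).symm
  simp only [Function.comp_apply, hfix] at hlt₁ hlt₂
  refine mem_interlopers.mpr ⟨hvK, ⟨k, hk, (hmin' k₁ hk₁).trans_lt hlt₁⟩, ?_⟩
  rcases eq_or_ne k₂ k with rfl | hk₂k
  · rw [Equiv.swap_apply_right] at hlt₂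
    exact ⟨kr, hkr, hlt₂.trans hxkr⟩
  · rw [Equiv.swap_apply_of_ne_of_ne (ne_of_mem_of_not_mem hk₂ hxK) hk₂k] at hlt₂
    exact ⟨k₂, hk₂, hlt₂⟩

end Interlopers

section Arrangements

variable {α : Type*} [Fintype α] [DecidableEq α]

lemma exists_swap_lincost_le_of_mem_interlopers (H : SimpleGraph α) {K : Finset α}
    (hK : ∀ k ∈ K, ∀ v, v ≠ k → H.Adj k v) (f : α → ℤ) {x : α} (hx : x ∈ interlopers K f) :
    ∃ k ∈ K, lincost H (f ∘ Equiv.swap x k) ≤ lincost H f ∧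
      interlopers K (f ∘ Equiv.swap x k) ⊂ interlopers K f := by
  obtain ⟨-, ⟨kl, hkl, hklx⟩, kr, hkr, hxkr⟩ := mem_interlopers.mp hx
  obtain ⟨k₁, hk₁, hmin⟩ := exists_min_image K f ⟨kl, hkl⟩
  obtain ⟨k₂, hk₂, hmax⟩ := exists_max_image K f ⟨kl, hkl⟩
  rcases sum_abs_sub_le_or_sum_abs_sub_le (Hᶜ.neighborFinset x) f
    ((hmin kl hkl).trans_lt hklx) (hxkr.trans_le (hmax kr hkr)) with h | h
  · refine ⟨k₁, hk₁, ?_, interlopers_comp_swap_ssubset hx hk₁ hmin⟩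
    rw [lincost_comp_swap_of_forall_adj H f (hK k₁ hk₁)]
    linarith
  · refine ⟨k₂, hk₂, ?_, ?_⟩
    · rw [lincost_comp_swap_of_forall_adj H f (hK k₂ hk₂)]
      linarith
    · -- the rightmost vertex of `K` is the leftmost one for the reversed order
      have h := interlopers_comp_swap_ssubset (f := OrderDual.toDual ∘ f)
        (by rwa [interlopers_toDual_comp]) hk₂ fun k' hk' => hmax k' hk'
      rwa [Function.comp_assoc, interlopers_toDual_comp, interlopers_toDual_comp] at h

lemma exists_consecutive_of_interlopers_eq_empty {T : ℕ} (π : α ≃ Fin T) (K : Finset α)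
    (h : interlopers K (fun v => ((π v : ℕ) : ℤ)) = ∅) :
    ∃ a : ℕ, ∀ k ∈ K, a ≤ (π k : ℕ) ∧ (π k : ℕ) < a + #K := by
  rcases K.eq_empty_or_nonempty with rfl | hK
  · exact ⟨0, by simp⟩
  obtain ⟨k₁, hk₁, hmin⟩ := exists_min_image K (fun v => (π v : ℕ)) hK
  obtain ⟨k₂, hk₂, hmax⟩ := exists_max_image K (fun v => (π v : ℕ)) hK
  have hIcc : Icc (π k₁ : ℕ) (π k₂) ⊆ K.image (fun v => (π v : ℕ)) := by
    intro t ht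
    rw [mem_Icc] at ht
    set v := π.symm ⟨t, ht.2.trans_lt (π k₂).isLt⟩
    have hvt : (π v : ℕ) = t := by simp [v]
    refine mem_image.mpr ⟨v, ?_, hvt⟩
    by_contra hvK
    have hv : v ∈ interlopers K (fun v => ((π v : ℕ) : ℤ)) := by
      refine mem_interlopers.mpr ⟨hvK, ⟨k₁, hk₁, ?_⟩, ⟨k₂, hk₂, ?_⟩⟩
      · have : (π k₁ : ℕ) ≠ π v :=
          Fin.val_injective.ne (π.injective.ne (ne_of_mem_of_not_mem hk₁ hvK))
        omega
      · have : (π k₂ : ℕ) ≠ π v :=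
          Fin.val_injective.ne (π.injective.ne (ne_of_mem_of_not_mem hk₂ hvK))
        omega
    simp [h] at hv
  have hcard := (card_le_card hIcc).trans card_image_le
  rw [Nat.card_Icc] at hcard
  exact ⟨π k₁, fun k hk => ⟨hmin k hk, by have := hmax k hk; omega⟩⟩

theorem exists_optimal_arrangement_consecutive_of_forall_adj (H : SimpleGraph α)
    (K : Finset α) (hK : ∀ k ∈ K, ∀ v, v ≠ k → H.Adj k v) {T : ℕ} [Nonempty (α ≃ Fin T)] :
    ∃ π : α ≃ Fin T,
      (∀ π' : α ≃ Fin T, lincost H (fun v => ((π v : ℕ) : ℤ)) ≤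
        lincost H (fun v => ((π' v : ℕ) : ℤ))) ∧
      ∃ a : ℕ, ∀ k ∈ K, a ≤ (π k : ℕ) ∧ (π k : ℕ) < a + #K := by
  set cost : (α ≃ Fin T) → ℤ := fun π => lincost H (fun v => ((π v : ℕ) : ℤ))
  obtain ⟨π₀, -, hπ₀⟩ := exists_min_image univ cost univ_nonempty
  obtain ⟨π, hπ, hfewest⟩ := exists_min_image {π | ∀ π', cost π ≤ cost π'}
    (fun π => #(interlopers K (fun v => ((π v : ℕ) : ℤ))))
    ⟨π₀, mem_filter.mpr ⟨mem_univ _, fun π' => hπ₀ π' (mem_univ _)⟩⟩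
  have hopt := (mem_filter.mp hπ).2
  refine ⟨π, hopt, exists_consecutive_of_interlopers_eq_empty π K ?_⟩
  by_contra hne
  obtain ⟨x, hx⟩ := nonempty_iff_ne_empty.mpr hne
  obtain ⟨k, -, hcost, hfewer⟩ := exists_swap_lincost_le_of_mem_interlopers H hK _ hx
  have := hfewest ((Equiv.swap x k).trans π)
    (mem_filter.mpr ⟨mem_univ _, fun π' => hcost.trans (hopt π')⟩)
  exact (card_lt_card hfewer).not_ge this

end Arrangements

lemma gareyGraph_adj_inr {V : Type*} (G : SimpleGraph V) {N : ℕ} (j : Fin N) {v : V ⊕ Fin N}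
    (hv : v ≠ Sum.inr j) : (gareyGraph G N).Adj (Sum.inr j) v :=
  ⟨hv.symm, fun _ _ h => by cases h⟩

theorem exists_optimal_arrangement_clique_consecutive_general
    {V : Type*} [Fintype V] [DecidableEq V] (G : SimpleGraph V)
    (n : ℕ) (hn : n = Fintype.card V)
    (M : ℕ) :
    ∃ π : (V ⊕ Fin (M * n)) ≃ Fin (n + M * n),
      (∀ π' : (V ⊕ Fin (M * n)) ≃ Fin (n + M * n),
        lincost (gareyGraph G (M * n)) (fun v => ((π v : ℕ) : ℤ)) ≤
          lincost (gareyGraph G (M * n)) (fun v => ((π' v : ℕ) : ℤ))) ∧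
      ∃ a : ℕ, ∀ j : Fin (M * n),
        a ≤ (π (Sum.inr j) : ℕ) ∧ (π (Sum.inr j) : ℕ) < a + M * n := by
  have : Nonempty ((V ⊕ Fin (M * n)) ≃ Fin (n + M * n)) :=
    ⟨Fintype.equivFinOfCardEq (by simp [hn])⟩
  obtain ⟨π, hopt, a, ha⟩ := exists_optimal_arrangement_consecutive_of_forall_adj
    (gareyGraph G (M * n)) (univ.map .inr) (T := n + M * n)
    (by simpa using gareyGraph_adj_inr G)
  exact ⟨π, hopt, a, fun j => by simpa using ha (Sum.inr j) (by simp)⟩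

/-- For the graph `G'` obtained by adding a fully connected clique `K` of `M·n` fresh
vertices to the complement of `G` (where `G` has `n ≥ 1` vertices), there is a linear
arrangement of `G'` of minimum cost in which the clique `K` is consecutive. -/
theorem exists_optimal_arrangement_clique_consecutive
    {V : Type*} [Fintype V] [DecidableEq V] (G : SimpleGraph V)
    (n : ℕ) (hn : n = Fintype.card V) (hn1 : 1 ≤ n)
    (M : ℕ) (hM : 1 ≤ M) :
    ∃ π : (V ⊕ Fin (M * n)) ≃ Fin (n + M * n),
      (∀ π' : (V ⊕ Fin (M * n)) ≃ Fin (n + M * n),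
        lincost (gareyGraph G (M * n)) (fun v => ((π v : ℕ) : ℤ)) ≤
          lincost (gareyGraph G (M * n)) (fun v => ((π' v : ℕ) : ℤ))) ∧
      ∃ a : ℕ, ∀ j : Fin (M * n),
        a ≤ (π (Sum.inr j) : ℕ) ∧ (π (Sum.inr j) : ℕ) < a + M * n :=
  exists_optimal_arrangement_clique_consecutive_general G n hn M
end
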